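/- arXiv:2104.09264 — 4 statements merged into one kernel-verified Lean document; each statement's English description precedes it below -/
import Mathlib

section
/- Let E be a real inner product space, ε > 0, g₁, g₂ ∈ E, and p₁, p₂ ∈ ℝ. Set A₁ := √(‖g₁‖²+ε²) and A₂ := √(‖g₂‖²+ε²). Then p₁·g₁/A₁ − p₂·g₂/A₂ = (1/2)·(p₁/A₂ + p₂/A₁)·(g₁ − g₂) − (1/2)·(⟨g₁+g₂, g₁−g₂⟩/(A₁·A₂·(A₁+A₂)))·(p₁·g₁ + p₂·g₂) + ((p₁−p₂)/2)·(g₁/A₁ + g₂/A₂). -/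
/-!
With `A = √(‖g‖² + ε²)` one has `⟪g₁ + g₂, g₁ - g₂⟫ = ‖g₁‖² - ‖g₂‖² = A₁² - A₂²`, so the coefficient
`⟪g₁ + g₂, g₁ - g₂⟫ / (A₁ A₂ (A₁ + A₂))` is just `1/A₂ - 1/A₁`. After this substitution the identity
holds in any vector space over a field of characteristic zero, by comparing the coefficients of
`g₁` and `g₂`.
-/

theorem real_inner_add_sub_eq_norm_sq_sub_norm_sq {E : Type*} [NormedAddCommGroup E]
    [InnerProductSpace ℝ E] (x y : E) : inner ℝ (x + y) (x - y) = ‖x‖ ^ 2 - ‖y‖ ^ 2 := by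
  rw [inner_add_left, inner_sub_right, inner_sub_right, real_inner_self_eq_norm_sq,
    real_inner_self_eq_norm_sq, real_inner_comm x y]
  ring

theorem sq_sqrt_norm_sq_add_sq_sub {E : Type*} [NormedAddCommGroup E] (x y : E) (ε : ℝ) :
    Real.sqrt (‖x‖ ^ 2 + ε ^ 2) ^ 2 - Real.sqrt (‖y‖ ^ 2 + ε ^ 2) ^ 2 = ‖x‖ ^ 2 - ‖y‖ ^ 2 := by
  rw [Real.sq_sqrt (by positivity), Real.sq_sqrt (by positivity)]
  ring

theorem div_smul_sub_div_smul_eq_symmetric_form {K V : Type*} [Field K] [CharZero K] [AddCommGroup V]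
    [Module K V] {A₁ A₂ : K} (h₁ : A₁ ≠ 0) (h₂ : A₂ ≠ 0) (h₁₂ : A₁ + A₂ ≠ 0)
    (g₁ g₂ : V) (p₁ p₂ : K) :
    (p₁ / A₁) • g₁ - (p₂ / A₂) • g₂ =
      ((1 / 2) * (p₁ / A₂ + p₂ / A₁)) • (g₁ - g₂)
        - ((1 / 2) * ((A₁ ^ 2 - A₂ ^ 2) / (A₁ * A₂ * (A₁ + A₂)))) • (p₁ • g₁ + p₂ • g₂)
        + ((p₁ - p₂) / 2) • ((1 / A₁) • g₁ + (1 / A₂) • g₂) := by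
  match_scalars <;> field_simp <;> ring

/-- Symmetric-form difference identity (equation (5.13) of the paper) for the
pointwise nonlinearity `g ↦ p·g/√(‖g‖²+ε²)` of the regularized viscous-plastic
stress `𝕊_ε`. -/
theorem stmt1 {E : Type*} [NormedAddCommGroup E] [InnerProductSpace ℝ E]
    (ε : ℝ) (hε : 0 < ε) (g₁ g₂ : E) (p₁ p₂ : ℝ) (A₁ A₂ : ℝ)
    (hA₁ : A₁ = Real.sqrt (‖g₁‖ ^ 2 + ε ^ 2))
    (hA₂ : A₂ = Real.sqrt (‖g₂‖ ^ 2 + ε ^ 2)) :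
    (p₁ / A₁) • g₁ - (p₂ / A₂) • g₂ =
      ((1 / 2) * (p₁ / A₂ + p₂ / A₁)) • (g₁ - g₂)
        - ((1 / 2) * ((inner ℝ (g₁ + g₂) (g₁ - g₂) : ℝ) / (A₁ * A₂ * (A₁ + A₂))))
            • (p₁ • g₁ + p₂ • g₂)
        + ((p₁ - p₂) / 2) • ((1 / A₁) • g₁ + (1 / A₂) • g₂) := by
  have hA₁_pos : 0 < A₁ := hA₁ ▸ Real.sqrt_pos.2 (by positivity)
  have hA₂_pos : 0 < A₂ := hA₂ ▸ Real.sqrt_pos.2 (by positivity)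
  have h_inner : inner ℝ (g₁ + g₂) (g₁ - g₂) = A₁ ^ 2 - A₂ ^ 2 := by
    rw [real_inner_add_sub_eq_norm_sq_sub_norm_sq, hA₁, hA₂, sq_sqrt_norm_sq_add_sq_sub]
  rw [h_inner]
  exact div_smul_sub_div_smul_eq_symmetric_form hA₁_pos.ne' hA₂_pos.ne' (by positivity) g₁ g₂ p₁ p₂
end

section
/- Let E be a real inner product space, ε > 0, p₁, p₂ ≥ 0 real numbers, and g₁, g₂, d ∈ E. Set A₁ := √(‖g₁‖²+ε²) and A₂ := √(‖g₂‖²+ε²), and define M := (p₁·A₁ + p₂·A₂)·(A₁+A₂)·‖d‖² − ⟨g₁+g₂, d⟩·⟨p₁·g₁ + p₂·g₂, d⟩. Then M ≥ 2·(p₁+p₂)·ε²·‖d‖². -/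
/-!
Writing `u = ⟪g₁, d⟫` and `v = ⟪g₂, d⟫`, the numerator splits as
`M = p₁ (A₁² ‖d‖² - u²) + p₂ (A₂² ‖d‖² - v²) + (p₁ + p₂) (A₁ A₂ ‖d‖² - u v)`.
Each bracket is at least `ε² ‖d‖²`: Cauchy–Schwarz in `E` bounds `u v` by `‖g₁‖ ‖g₂‖ ‖d‖²`,
and Cauchy–Schwarz in `ℝ²` for `(‖g₁‖, ε)` and `(‖g₂‖, ε)` gives `‖g₁‖ ‖g₂‖ + ε² ≤ A₁ A₂`.
-/

lemma mul_add_sq_le_sqrt_mul_sqrt (a b c : ℝ) :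
    a * b + c ^ 2 ≤ √(a ^ 2 + c ^ 2) * √(b ^ 2 + c ^ 2) := by
  rw [← Real.sqrt_mul (by positivity)]
  refine (le_abs_self _).trans (Real.abs_le_sqrt ?_)
  nlinarith [sq_nonneg (c * (a - b))]

lemma real_inner_mul_inner_add_sq_mul_le {E : Type*} [SeminormedAddCommGroup E]
    [InnerProductSpace ℝ E] (g₁ g₂ d : E) (ε : ℝ) :
    inner ℝ g₁ d * inner ℝ g₂ d + ε ^ 2 * ‖d‖ ^ 2
      ≤ √(‖g₁‖ ^ 2 + ε ^ 2) * √(‖g₂‖ ^ 2 + ε ^ 2) * ‖d‖ ^ 2 := by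
  have hinner : inner ℝ g₁ d * inner ℝ g₂ d ≤ ‖g₁‖ * ‖g₂‖ * ‖d‖ ^ 2 :=
    calc inner ℝ g₁ d * inner ℝ g₂ d
        ≤ |inner ℝ g₁ d| * |inner ℝ g₂ d| := by rw [← abs_mul]; exact le_abs_self _
      _ ≤ (‖g₁‖ * ‖d‖) * (‖g₂‖ * ‖d‖) :=
          mul_le_mul (abs_real_inner_le_norm _ _) (abs_real_inner_le_norm _ _)
            (abs_nonneg _) (by positivity)
      _ = ‖g₁‖ * ‖g₂‖ * ‖d‖ ^ 2 := by ring
  have hsqrt := mul_le_mul_of_nonneg_right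
    (mul_add_sq_le_sqrt_mul_sqrt ‖g₁‖ ‖g₂‖ ε) (sq_nonneg ‖d‖)
  linarith

theorem stmt4_general {E : Type*} [NormedAddCommGroup E] [InnerProductSpace ℝ E]
    (ε : ℝ) (p₁ p₂ : ℝ) (hp₁ : 0 ≤ p₁) (hp₂ : 0 ≤ p₂)
    (g₁ g₂ d : E) (A₁ A₂ M : ℝ)
    (hA₁ : A₁ = Real.sqrt (‖g₁‖ ^ 2 + ε ^ 2))
    (hA₂ : A₂ = Real.sqrt (‖g₂‖ ^ 2 + ε ^ 2))
    (hM : M = (p₁ * A₁ + p₂ * A₂) * (A₁ + A₂) * ‖d‖ ^ 2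
      - (inner ℝ (g₁ + g₂) d : ℝ) * (inner ℝ (p₁ • g₁ + p₂ • g₂) d : ℝ)) :
    M ≥ 2 * (p₁ + p₂) * ε ^ 2 * ‖d‖ ^ 2 := by
  have h₁₁ := real_inner_mul_inner_add_sq_mul_le g₁ g₁ d ε
  have h₂₂ := real_inner_mul_inner_add_sq_mul_le g₂ g₂ d ε
  have h₁₂ := real_inner_mul_inner_add_sq_mul_le g₁ g₂ d ε
  simp only [← hA₁, ← hA₂] at h₁₁ h₂₂ h₁₂
  have hsplit : M = p₁ * (A₁ * A₁ * ‖d‖ ^ 2 - inner ℝ g₁ d * inner ℝ g₁ d)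
      + p₂ * (A₂ * A₂ * ‖d‖ ^ 2 - inner ℝ g₂ d * inner ℝ g₂ d)
      + (p₁ + p₂) * (A₁ * A₂ * ‖d‖ ^ 2 - inner ℝ g₁ d * inner ℝ g₂ d) := by
    rw [hM, inner_add_left, inner_add_left, real_inner_smul_left, real_inner_smul_left]
    ring
  rw [hsplit]
  linarith [mul_le_mul_of_nonneg_left (sub_nonneg.2 h₁₁) hp₁,
    mul_le_mul_of_nonneg_left (sub_nonneg.2 h₂₂) hp₂,
    mul_le_mul_of_nonneg_left (sub_nonneg.2 h₁₂) (add_nonneg hp₁ hp₂)]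

/-- Strict positivity of the numerator `M` appearing in the symmetric-form
difference identity for the regularized viscous-plastic stress `𝕊_ε`:
`M ≥ 2(p₁+p₂)ε²‖d‖²`. -/
theorem stmt4 {E : Type*} [NormedAddCommGroup E] [InnerProductSpace ℝ E]
    (ε : ℝ) (hε : 0 < ε) (p₁ p₂ : ℝ) (hp₁ : 0 ≤ p₁) (hp₂ : 0 ≤ p₂)
    (g₁ g₂ d : E) (A₁ A₂ M : ℝ)
    (hA₁ : A₁ = Real.sqrt (‖g₁‖ ^ 2 + ε ^ 2))
    (hA₂ : A₂ = Real.sqrt (‖g₂‖ ^ 2 + ε ^ 2))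
    (hM : M = (p₁ * A₁ + p₂ * A₂) * (A₁ + A₂) * ‖d‖ ^ 2
      - (inner ℝ (g₁ + g₂) d : ℝ) * (inner ℝ (p₁ • g₁ + p₂ • g₂) d : ℝ)) :
    M ≥ 2 * (p₁ + p₂) * ε ^ 2 * ‖d‖ ^ 2 :=
  stmt4_general ε p₁ p₂ hp₁ hp₂ g₁ g₂ d A₁ A₂ M hA₁ hA₂ hM
end

section
/- Let E be a real inner product space, ε > 0, K ≥ 0, p₁, p₂ ≥ 0 real numbers, and g₁, g₂ ∈ E with ‖g₁‖ ≤ K and ‖g₂‖ ≤ K. Set A₁ := √(‖g₁‖²+ε²) and A₂ := √(‖g₂‖²+ε²). Then ⟨p₁·g₁/A₁ − p₂·g₂/A₂, g₁ − g₂⟩ ≥ ((p₁+p₂)·ε² / (2·(K²+ε²)^{3/2}))·‖g₁−g₂‖² − |p₁−p₂|·‖g₁−g₂‖. -/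
/-!
With `F g = g / √(‖g‖² + ε²)`, split `p₁ F g₁ - p₂ F g₂` into
`(p₁ + p₂)/2 • (F g₁ - F g₂) + (p₁ - p₂)/2 • (F g₁ + F g₂)`. Since `‖F g‖ ≤ 1`, the second part
costs at most `|p₁ - p₂| ‖g₁ - g₂‖`. For the first, with `A, B` the two square roots and
`d = ‖g₁ - g₂‖`, one has `2AB ⟪F g₁ - F g₂, g₁ - g₂⟫ = (A + B)(d² - (A - B)²)`; as
`A² - B² = ‖g₁‖² - ‖g₂‖²` and `|‖g₁‖ - ‖g₂‖| ≤ d`, while `AB ≥ ‖g₁‖‖g₂‖ + ε²` (Cauchy–Schwarz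
for `(‖gᵢ‖, ε)`), this is at least `4ε²d² / (A + B)`, and `A, B ≤ √(K² + ε²)` finishes.
-/

theorem four_mul_sq_mul_sq_le_of_sq_eq_sq_add_sq {ε a b A B d : ℝ} (hA : 0 ≤ A) (hB : 0 ≤ B)
    (hA2 : A ^ 2 = a ^ 2 + ε ^ 2) (hB2 : B ^ 2 = b ^ 2 + ε ^ 2) (hd : |a - b| ≤ d) :
    4 * ε ^ 2 * d ^ 2 ≤ (A + B) ^ 2 * (d ^ 2 - (A - B) ^ 2) := by
  have hAB : a * b + ε ^ 2 ≤ A * B := by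
    refine (le_abs_self _).trans (abs_le_of_sq_le_sq ?_ (by positivity))
    nlinarith [sq_nonneg (ε * (a - b))]
  have hsum : 4 * ε ^ 2 ≤ (A + B) ^ 2 - (a + b) ^ 2 := by nlinarith
  have hdiff : (A + B) ^ 2 * (A - B) ^ 2 ≤ (a + b) ^ 2 * d ^ 2 := by
    have hsq : (a - b) ^ 2 ≤ d ^ 2 := by
      simpa only [sq_abs] using pow_le_pow_left₀ (abs_nonneg _) hd 2
    calc (A + B) ^ 2 * (A - B) ^ 2 = (a + b) ^ 2 * (a - b) ^ 2 := by
          linear_combination (A ^ 2 - B ^ 2 + a ^ 2 - b ^ 2) * (hA2 - hB2)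
      _ ≤ (a + b) ^ 2 * d ^ 2 := by gcongr
  calc 4 * ε ^ 2 * d ^ 2 ≤ ((A + B) ^ 2 - (a + b) ^ 2) * d ^ 2 := by gcongr
    _ ≤ (A + B) ^ 2 * (d ^ 2 - (A - B) ^ 2) := by linear_combination hdiff

section InnerProductSpace

variable {E : Type*} [NormedAddCommGroup E] [InnerProductSpace ℝ E]

theorem two_mul_mul_inner_inv_smul_sub {c A B : ℝ} {g₁ g₂ : E} (hA : A ≠ 0) (hB : B ≠ 0)
    (hA2 : A ^ 2 = ‖g₁‖ ^ 2 + c) (hB2 : B ^ 2 = ‖g₂‖ ^ 2 + c) :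
    2 * A * B * inner ℝ (A⁻¹ • g₁ - B⁻¹ • g₂) (g₁ - g₂)
      = (A + B) * (‖g₁ - g₂‖ ^ 2 - (A - B) ^ 2) := by
  rw [norm_sub_sq_real]
  simp only [inner_sub_left, inner_sub_right, real_inner_smul_left, real_inner_self_eq_norm_sq,
    real_inner_comm g₁ g₂]
  field_simp
  linear_combination (A - B) * hA2 + (B - A) * hB2

noncomputable def regNormalize (ε : ℝ) (g : E) : E := (√(‖g‖ ^ 2 + ε ^ 2))⁻¹ • g

theorem norm_regNormalize_le_one (ε : ℝ) (g : E) : ‖regNormalize ε g‖ ≤ 1 := by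
  have hg : ‖g‖ ≤ √(‖g‖ ^ 2 + ε ^ 2) :=
    (Real.le_sqrt (norm_nonneg g) (by positivity)).2 (le_add_of_nonneg_right (sq_nonneg ε))
  rw [regNormalize, norm_smul, norm_inv, Real.norm_of_nonneg (Real.sqrt_nonneg _)]
  exact inv_mul_le_one_of_le₀ hg (Real.sqrt_nonneg _)

theorem mul_norm_sub_sq_le_inner_regNormalize_sub {ε K : ℝ} (hε : 0 < ε) {g₁ g₂ : E}
    (hg₁ : ‖g₁‖ ≤ K) (hg₂ : ‖g₂‖ ≤ K) :
    ε ^ 2 / √(K ^ 2 + ε ^ 2) ^ 3 * ‖g₁ - g₂‖ ^ 2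
      ≤ inner ℝ (regNormalize ε g₁ - regNormalize ε g₂) (g₁ - g₂) := by
  set A := √(‖g₁‖ ^ 2 + ε ^ 2)
  set B := √(‖g₂‖ ^ 2 + ε ^ 2)
  set M := √(K ^ 2 + ε ^ 2)
  set d := ‖g₁ - g₂‖
  have hA : 0 < A := Real.sqrt_pos.2 (by positivity)
  have hB : 0 < B := Real.sqrt_pos.2 (by positivity)
  have hA2 : A ^ 2 = ‖g₁‖ ^ 2 + ε ^ 2 := Real.sq_sqrt (by positivity)
  have hB2 : B ^ 2 = ‖g₂‖ ^ 2 + ε ^ 2 := Real.sq_sqrt (by positivity)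
  have hAM : A ≤ M := Real.sqrt_le_sqrt (by gcongr)
  have hBM : B ≤ M := Real.sqrt_le_sqrt (by gcongr)
  have hkey : 4 * ε ^ 2 * d ^ 2 ≤ (A + B) ^ 2 * (d ^ 2 - (A - B) ^ 2) :=
    four_mul_sq_mul_sq_le_of_sq_eq_sq_add_sq hA.le hB.le hA2 hB2 (abs_norm_sub_norm_le g₁ g₂)
  have hinner : inner ℝ (regNormalize ε g₁ - regNormalize ε g₂) (g₁ - g₂)
      = (A + B) ^ 2 * (d ^ 2 - (A - B) ^ 2) / (2 * A * B * (A + B)) := by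
    change inner ℝ (A⁻¹ • g₁ - B⁻¹ • g₂) (g₁ - g₂) = _
    rw [eq_div_iff (by positivity)]
    linear_combination (A + B) * two_mul_mul_inner_inv_smul_sub hA.ne' hB.ne' hA2 hB2
  rw [hinner]
  calc ε ^ 2 / M ^ 3 * d ^ 2 = 4 * ε ^ 2 * d ^ 2 / (2 * M * M * (M + M)) := by
        field_simp; ring
    _ ≤ 4 * ε ^ 2 * d ^ 2 / (2 * A * B * (A + B)) := by gcongr
    _ ≤ (A + B) ^ 2 * (d ^ 2 - (A - B) ^ 2) / (2 * A * B * (A + B)) := by gcongr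

end InnerProductSpace

theorem stmt5_general {E : Type*} [NormedAddCommGroup E] [InnerProductSpace ℝ E]
    (ε K : ℝ) (hε : 0 < ε)
    (p₁ p₂ : ℝ) (hp₁ : 0 ≤ p₁) (hp₂ : 0 ≤ p₂)
    (g₁ g₂ : E) (hg₁ : ‖g₁‖ ≤ K) (hg₂ : ‖g₂‖ ≤ K)
    (A₁ A₂ : ℝ)
    (hA₁ : A₁ = Real.sqrt (‖g₁‖ ^ 2 + ε ^ 2))
    (hA₂ : A₂ = Real.sqrt (‖g₂‖ ^ 2 + ε ^ 2)) :
    (inner ℝ ((p₁ / A₁) • g₁ - (p₂ / A₂) • g₂) (g₁ - g₂) : ℝ)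
      ≥ ((p₁ + p₂) * ε ^ 2 / (2 * (K ^ 2 + ε ^ 2) ^ ((3 : ℝ) / 2))) * ‖g₁ - g₂‖ ^ 2
        - |p₁ - p₂| * ‖g₁ - g₂‖ := by
  set F : E → E := regNormalize ε
  set d := ‖g₁ - g₂‖
  have hsplit : (p₁ / A₁) • g₁ - (p₂ / A₂) • g₂
      = ((p₁ + p₂) / 2) • (F g₁ - F g₂) + ((p₁ - p₂) / 2) • (F g₁ + F g₂) := by
    simp only [F, regNormalize, ← hA₁, ← hA₂]
    module
  have hsym : (p₁ + p₂) * ε ^ 2 / (2 * √(K ^ 2 + ε ^ 2) ^ 3) * d ^ 2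
      ≤ (p₁ + p₂) / 2 * inner ℝ (F g₁ - F g₂) (g₁ - g₂) := by
    calc _ = (p₁ + p₂) / 2 * (ε ^ 2 / √(K ^ 2 + ε ^ 2) ^ 3 * d ^ 2) := by ring
      _ ≤ _ := by gcongr; exact mul_norm_sub_sq_le_inner_regNormalize_sub hε hg₁ hg₂
  have hskew : |(p₁ - p₂) / 2 * inner ℝ (F g₁ + F g₂) (g₁ - g₂)| ≤ |p₁ - p₂| * d := by
    have hF : ‖F g₁ + F g₂‖ ≤ 2 := (norm_add_le _ _).trans <| by
      linarith [norm_regNormalize_le_one ε g₁, norm_regNormalize_le_one ε g₂]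
    calc |(p₁ - p₂) / 2 * inner ℝ (F g₁ + F g₂) (g₁ - g₂)|
        ≤ |p₁ - p₂| / 2 * (‖F g₁ + F g₂‖ * d) := by
          rw [abs_mul, abs_div, abs_two]; gcongr; exact abs_real_inner_le_norm _ _
      _ ≤ |p₁ - p₂| / 2 * (2 * d) := by gcongr
      _ = |p₁ - p₂| * d := by ring
  rw [hsplit, inner_add_left, real_inner_smul_left, real_inner_smul_left,
    Real.rpow_div_two_eq_sqrt _ (by positivity), ge_iff_le]
  norm_cast
  linarith [neg_abs_le ((p₁ - p₂) / 2 * inner ℝ (F g₁ + F g₂) (g₁ - g₂))]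

/-- Monotonicity inequality for the pointwise nonlinearity
`(p, g) ↦ p·g/√(‖g‖²+ε²)` of the regularized viscous-plastic stress `𝕊_ε`. -/
theorem stmt5 {E : Type*} [NormedAddCommGroup E] [InnerProductSpace ℝ E]
    (ε K : ℝ) (hε : 0 < ε) (hK : 0 ≤ K)
    (p₁ p₂ : ℝ) (hp₁ : 0 ≤ p₁) (hp₂ : 0 ≤ p₂)
    (g₁ g₂ : E) (hg₁ : ‖g₁‖ ≤ K) (hg₂ : ‖g₂‖ ≤ K)
    (A₁ A₂ : ℝ)
    (hA₁ : A₁ = Real.sqrt (‖g₁‖ ^ 2 + ε ^ 2))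
    (hA₂ : A₂ = Real.sqrt (‖g₂‖ ^ 2 + ε ^ 2)) :
    (inner ℝ ((p₁ / A₁) • g₁ - (p₂ / A₂) • g₂) (g₁ - g₂) : ℝ)
      ≥ ((p₁ + p₂) * ε ^ 2 / (2 * (K ^ 2 + ε ^ 2) ^ ((3 : ℝ) / 2))) * ‖g₁ - g₂‖ ^ 2
        - |p₁ - p₂| * ‖g₁ - g₂‖ :=
  stmt5_general ε K hε p₁ p₂ hp₁ hp₂ g₁ g₂ hg₁ hg₂ A₁ A₂ hA₁ hA₂
end

section
/- Let E be a real inner product space, ε > 0, and g₁, g₂ ∈ E. Then ‖g₁/√(‖g₁‖²+ε²) − g₂/√(‖g₂‖²+ε²)‖ ≤ (2/ε)·‖g₁ − g₂‖. -/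
/-! The regularized norm `√(‖g‖² + ε²)` is the norm of `(g, ε)` in `E × ℝ` with the `L²` norm, so
it is `1`-Lipschitz in `g` and dominates both `‖g‖` and `ε`. Writing `a`, `b` for the regularized
norms of `g₁`, `g₂`, the difference `a⁻¹ g₁ - b⁻¹ g₂ = a⁻¹ (g₁ - g₂) + (a⁻¹ - b⁻¹) g₂` then has
both terms bounded by `‖g₁ - g₂‖ / ε`. -/

section RegularizedNorm

variable {E : Type*} [SeminormedAddCommGroup E]

lemma sqrt_norm_sq_add_sq_eq_norm_toLp (g : E) (ε : ℝ) :
    √(‖g‖ ^ 2 + ε ^ 2) = ‖WithLp.toLp 2 (g, ε)‖ := by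
  rw [WithLp.prod_norm_eq_of_L2, WithLp.toLp_fst, WithLp.toLp_snd, Real.norm_eq_abs, sq_abs]

lemma norm_le_sqrt_norm_sq_add_sq (g : E) (ε : ℝ) : ‖g‖ ≤ √(‖g‖ ^ 2 + ε ^ 2) := by
  rw [sqrt_norm_sq_add_sq_eq_norm_toLp]
  exact WithLp.norm_fst_le E (WithLp.toLp 2 (g, ε))

lemma abs_le_sqrt_norm_sq_add_sq (g : E) (ε : ℝ) : |ε| ≤ √(‖g‖ ^ 2 + ε ^ 2) := by
  rw [sqrt_norm_sq_add_sq_eq_norm_toLp, ← Real.norm_eq_abs]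
  exact WithLp.norm_snd_le E (WithLp.toLp 2 (g, ε))

lemma abs_sqrt_norm_sq_add_sq_sub_le (g₁ g₂ : E) (ε : ℝ) :
    |√(‖g₁‖ ^ 2 + ε ^ 2) - √(‖g₂‖ ^ 2 + ε ^ 2)| ≤ ‖g₁ - g₂‖ := by
  simp only [sqrt_norm_sq_add_sq_eq_norm_toLp]
  calc _ ≤ ‖WithLp.toLp 2 (g₁, ε) - WithLp.toLp 2 (g₂, ε)‖ := abs_norm_sub_norm_le _ _
    _ = ‖g₁ - g₂‖ := by
      rw [← WithLp.toLp_sub, Prod.mk_sub_mk, sub_self, WithLp.norm_toLp_fst]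

end RegularizedNorm

lemma norm_inv_smul_sub_inv_smul_le {E : Type*} [SeminormedAddCommGroup E] [NormedSpace ℝ E]
    {a b : ℝ} (x y : E) (ha : 0 < a) (hb : 0 < b) (hy : ‖y‖ ≤ b) :
    ‖a⁻¹ • x - b⁻¹ • y‖ ≤ (‖x - y‖ + |a - b|) / a := by
  have hsplit : a⁻¹ • x - b⁻¹ • y = a⁻¹ • (x - y) + (a⁻¹ - b⁻¹) • y := by
    rw [smul_sub, sub_smul]; abel
  have hinv : |a⁻¹ - b⁻¹| * b = |a - b| / a := by
    rw [inv_sub_inv ha.ne' hb.ne', abs_div, abs_sub_comm, abs_of_pos (mul_pos ha hb)]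
    field_simp
  calc ‖a⁻¹ • x - b⁻¹ • y‖
      ≤ ‖a⁻¹ • (x - y)‖ + ‖(a⁻¹ - b⁻¹) • y‖ := hsplit ▸ norm_add_le _ _
    _ = a⁻¹ * ‖x - y‖ + |a⁻¹ - b⁻¹| * ‖y‖ := by
      rw [norm_smul, norm_smul, Real.norm_eq_abs, Real.norm_eq_abs, abs_of_pos (inv_pos.2 ha)]
    _ ≤ a⁻¹ * ‖x - y‖ + |a⁻¹ - b⁻¹| * b := by gcongr
    _ = (‖x - y‖ + |a - b|) / a := by rw [hinv]; ring

/-- Lipschitz bound, with constant `2/ε`, for the pointwise nonlinearity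
`g ↦ g/√(‖g‖²+ε²)` of the regularized viscous-plastic stress `𝕊_ε`. -/
theorem stmt7 {E : Type*} [NormedAddCommGroup E] [InnerProductSpace ℝ E]
    (ε : ℝ) (hε : 0 < ε) (g₁ g₂ : E) :
    ‖(Real.sqrt (‖g₁‖ ^ 2 + ε ^ 2))⁻¹ • g₁ - (Real.sqrt (‖g₂‖ ^ 2 + ε ^ 2))⁻¹ • g₂‖
      ≤ (2 / ε) * ‖g₁ - g₂‖ := by
  have hεa : ε ≤ √(‖g₁‖ ^ 2 + ε ^ 2) := (le_abs_self ε).trans (abs_le_sqrt_norm_sq_add_sq g₁ ε)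
  have hεb : ε ≤ √(‖g₂‖ ^ 2 + ε ^ 2) := (le_abs_self ε).trans (abs_le_sqrt_norm_sq_add_sq g₂ ε)
  calc _ ≤ (‖g₁ - g₂‖ + |√(‖g₁‖ ^ 2 + ε ^ 2) - √(‖g₂‖ ^ 2 + ε ^ 2)|) / √(‖g₁‖ ^ 2 + ε ^ 2) :=
        norm_inv_smul_sub_inv_smul_le g₁ g₂ (hε.trans_le hεa) (hε.trans_le hεb)
          (norm_le_sqrt_norm_sq_add_sq g₂ ε)
    _ ≤ (‖g₁ - g₂‖ + ‖g₁ - g₂‖) / ε := by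
      gcongr
      exact abs_sqrt_norm_sq_add_sq_sub_le g₁ g₂ ε
    _ = (2 / ε) * ‖g₁ - g₂‖ := by ring
end
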